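/- Let γ ∈ ℂ with κ := 2·Re(γ) ≠ 0, let η₁ = (η₁₁, η₁₂) and η₂ = (η₂₁, η₂₂) in ℂ², and let Γ = [[γ, 0],[1, γ]] be the 2×2 lower-triangular Jordan block. Define Ω := κ⁻¹ · Σ_{i=1}^{2} [[ |η_{i1}|² , η_{i1}·conj(η_{i2} − κ⁻¹·η_{i1}) ],[ conj(η_{i1})·(η_{i2} − κ⁻¹·η_{i1}) , |η_{i2} − κ⁻¹·η_{i1}|² + κ⁻²·|η_{i1}|² ]]. Then Γ·Ω + Ω·Γᴴ = η₁·η₁ᴴ + η₂·η₂ᴴ, and det(Ω) = κ⁻⁴·( |η₁₁|² + |η₂₁|² )² + κ⁻²·| η₁₁·η₂₂ − η₁₂·η₂₁ |². -/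

import Mathlib

open Matrix ComplexConjugate

/-! The left side of the Lyapunov equation is linear in `Ω`, so it suffices to solve it for one
rank-one right side `η ηᴴ` with `η = (a, b)`: the solution is `κ⁻¹ (v vᴴ + κ⁻² |a|² e₂ e₂ᵀ)` with
`v = (a, b - κ⁻¹ a)`, checked entrywise using `γ + conj γ = κ`. For the determinant, adding
`t e₂ e₂ᵀ` to `A` adds `t A₁₁`, and `det (v₁ v₁ᴴ + v₂ v₂ᴴ) = |a (d - κ⁻¹ c) - c (b - κ⁻¹ a)|²`,
in which the `κ⁻¹` terms cancel to leave `|a d - b c|²`. -/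

def jordanGram (s a b : ℂ) : Matrix (Fin 2) (Fin 2) ℂ :=
  !![((Complex.normSq a : ℝ) : ℂ), a * conj (b - s * a);
    conj a * (b - s * a),
      ((Complex.normSq (b - s * a) : ℝ) : ℂ) + s ^ 2 * ((Complex.normSq a : ℝ) : ℂ)]

theorem conjTranspose_lowerJordan (γ : ℂ) : !![γ, 0; 1, γ]ᴴ = !![conj γ, 1; 0, conj γ] := by
  ext i j
  fin_cases i <;> fin_cases j <;> simp

theorem jordanGram_lyapunov (γ : ℂ) (κ : ℝ) (hκ : κ = 2 * γ.re) (hκ0 : κ ≠ 0) (a b : ℂ) :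
    !![γ, 0; 1, γ] * ((κ : ℂ)⁻¹ • jordanGram (κ : ℂ)⁻¹ a b)
      + (κ : ℂ)⁻¹ • jordanGram (κ : ℂ)⁻¹ a b * !![γ, 0; 1, γ]ᴴ = !![a; b] * !![a; b]ᴴ := by
  have hconj : conj γ = κ - γ := by
    rw [hκ, ← Complex.add_conj]
    ring
  have hκ0' : (κ : ℂ) ≠ 0 := mod_cast hκ0
  rw [conjTranspose_lowerJordan, hconj]
  ext i j
  fin_cases i <;> fin_cases j <;>
    simp only [jordanGram, mul_apply, Matrix.add_apply, Matrix.smul_apply, conjTranspose_apply,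
      Fin.sum_univ_two, Fin.sum_univ_one, of_apply, cons_val', cons_val_zero, cons_val_one,
      cons_val_fin_one, empty_val', Fin.zero_eta, Fin.mk_one, Fin.isValue,
      smul_eq_mul, RCLike.star_def, ← Complex.mul_conj, map_sub, map_mul, map_inv₀,
      Complex.conj_ofReal] <;>
    field_simp <;> ring

theorem det_jordanGram_add (s a b c d : ℂ) :
    (jordanGram s a b + jordanGram s c d).det
      = s ^ 2 * ((Complex.normSq a + Complex.normSq c : ℝ) : ℂ) ^ 2
        + ((Complex.normSq (a * d - b * c) : ℝ) : ℂ) := by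
  simp only [jordanGram, det_fin_two, Matrix.add_apply, of_apply, cons_val', cons_val_zero,
    cons_val_one, cons_val_fin_one, empty_val', Fin.isValue, Complex.ofReal_add, ← Complex.mul_conj,
    map_sub, map_mul]
  ring

theorem stmt_6 (γ : ℂ) (κ : ℝ) (hκ : κ = 2 * γ.re) (hκ0 : κ ≠ 0)
    (η₁₁ η₁₂ η₂₁ η₂₂ : ℂ)
    (η₁ η₂ : Matrix (Fin 2) (Fin 1) ℂ)
    (hη₁ : η₁ = !![η₁₁; η₁₂]) (hη₂ : η₂ = !![η₂₁; η₂₂])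
    (Γ : Matrix (Fin 2) (Fin 2) ℂ) (hΓ : Γ = !![γ, 0; 1, γ])
    (Ω : Matrix (Fin 2) (Fin 2) ℂ)
    (hΩ : Ω = (κ : ℂ)⁻¹ •
      (!![((Complex.normSq η₁₁ : ℝ) : ℂ),
            η₁₁ * (starRingEnd ℂ) (η₁₂ - (κ : ℂ)⁻¹ * η₁₁);
          (starRingEnd ℂ) η₁₁ * (η₁₂ - (κ : ℂ)⁻¹ * η₁₁),
            ((Complex.normSq (η₁₂ - (κ : ℂ)⁻¹ * η₁₁) : ℝ) : ℂ)
              + ((κ : ℂ)⁻¹)^2 * ((Complex.normSq η₁₁ : ℝ) : ℂ)]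
       + !![((Complex.normSq η₂₁ : ℝ) : ℂ),
            η₂₁ * (starRingEnd ℂ) (η₂₂ - (κ : ℂ)⁻¹ * η₂₁);
          (starRingEnd ℂ) η₂₁ * (η₂₂ - (κ : ℂ)⁻¹ * η₂₁),
            ((Complex.normSq (η₂₂ - (κ : ℂ)⁻¹ * η₂₁) : ℝ) : ℂ)
              + ((κ : ℂ)⁻¹)^2 * ((Complex.normSq η₂₁ : ℝ) : ℂ)])) :
    Γ * Ω + Ω * Γᴴ = η₁ * η₁ᴴ + η₂ * η₂ᴴ ∧
    Ω.det = ((κ : ℂ)⁻¹)^4 * (((Complex.normSq η₁₁ + Complex.normSq η₂₁ : ℝ) : ℂ))^2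
        + ((κ : ℂ)⁻¹)^2 * ((Complex.normSq (η₁₁ * η₂₂ - η₁₂ * η₂₁) : ℝ) : ℂ) := by
  replace hΩ : Ω = (κ : ℂ)⁻¹ • jordanGram (κ : ℂ)⁻¹ η₁₁ η₁₂
      + (κ : ℂ)⁻¹ • jordanGram (κ : ℂ)⁻¹ η₂₁ η₂₂ := by
    rw [hΩ, smul_add]; rfl
  subst hη₁ hη₂ hΓ hΩ
  constructor
  · rw [mul_add, add_mul, add_add_add_comm, jordanGram_lyapunov γ κ hκ hκ0,
      jordanGram_lyapunov γ κ hκ hκ0]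
  · rw [← smul_add, det_smul, det_jordanGram_add, Fintype.card_fin]
    ring
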